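/- arXiv:1209.5623 — 2 statements merged into one kernel-verified Lean document; each statement's English description precedes it below -/
import Mathlib

section
/- Let n ≥ 2, let u : ℝⁿ → ℝⁿ be a Schwartz vector field with ∇·u = 0 everywhere, and let d : ℝⁿ → ℝ³ be smooth with ∇d a Schwartz function. Then ∫_{ℝⁿ} Δ(u·∇d)·Δd dx = Σ_{i=1}^n Σ_{k=1}^3 ∫_{ℝⁿ} ∂_i d_k Δd_k Δu_i dx + 2 Σ_{i,j=1}^n Σ_{k=1}^3 ∫_{ℝⁿ} ∂_i u_j ∂_i∂_j d_k Δd_k dx. In particular the transport contribution ∫ (u·∇)Δd·Δd dx vanishes. -/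
/-!
By the Leibniz rule,
`Δ(u_i ∂_i d_k) = Δu_i ∂_i d_k + 2 ∂_j u_i ∂_j ∂_i d_k + u_i Δ∂_i d_k`, and
`Δ∂_i d_k = ∂_i Δd_k` by the symmetry of second derivatives. Paired with `Δd_k`, the last
term is the transport term `∫ u_i ∂_i(Δd_k) Δd_k = ½ ∫ u · ∇|Δd_k|²`, which integrates by parts to
`-½ ∫ (∇ · u) |Δd_k|² = 0`. The components of `u`, the `∂_i d_k` and `Δd_k = Σ_i ∂_i (∂_i d_k)`
are Schwartz functions, so every product is integrable and integration by parts has no boundary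
terms.
-/

open MeasureTheory Real

noncomputable section

/-- `pd i f x` is the `i`-th partial derivative `∂ᵢ f (x)` of `f : ℝⁿ → ℝ`. -/
def pd {n : ℕ} (i : Fin n) (f : EuclideanSpace ℝ (Fin n) → ℝ)
    (x : EuclideanSpace ℝ (Fin n)) : ℝ :=
  fderiv ℝ f x (EuclideanSpace.single i 1)

/-- `lap f x` is the Laplacian `Δf(x) = Σᵢ ∂ᵢ∂ᵢ f (x)`. -/
def lap {n : ℕ} (f : EuclideanSpace ℝ (Fin n) → ℝ)
    (x : EuclideanSpace ℝ (Fin n)) : ℝ :=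
  ∑ i, pd i (fun y => pd i f y) x

open SchwartzMap LineDeriv Laplacian

section Normed

variable {E F : Type*} [NormedAddCommGroup E] [NormedSpace ℝ E]
  [NormedAddCommGroup F] [NormedSpace ℝ F]

theorem fderiv_fderiv_apply_comm {f : E → F} (hf : ContDiff ℝ 2 f) (x v w : E) :
    fderiv ℝ (fun y => fderiv ℝ f y v) x w = fderiv ℝ (fun y => fderiv ℝ f y w) x v := by
  have hdf : DifferentiableAt ℝ (fderiv ℝ f) x :=
    (hf.fderiv_right (m := 1) le_rfl).differentiable one_ne_zero x
  have key : ∀ v : E, fderiv ℝ (fun y => fderiv ℝ f y v) x = (fderiv ℝ (fderiv ℝ f) x).flip v :=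
    fun v => by simp [fderiv_clm_apply hdf (differentiableAt_const v)]
  rw [key, key]
  exact hf.contDiffAt.isSymmSndFDerivAt (by simp [minSmoothness_of_isRCLikeNormedField]) w v

theorem SchwartzMap.lineDerivOp_comm (f : 𝓢(E, F)) (v w : E) :
    ∂_{v} (∂_{w} f) = ∂_{w} (∂_{v} f) := by
  ext x
  exact fderiv_fderiv_apply_comm (f.smooth 2) x w v

instance SchwartzMap.instMul : Mul 𝓢(E, ℝ) := ⟨fun f g => pairing (ContinuousLinearMap.mul ℝ ℝ) f g⟩

@[simp]
theorem SchwartzMap.mul_apply (f g : 𝓢(E, ℝ)) (x : E) : (f * g) x = f x * g x := rfl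

theorem SchwartzMap.lineDerivOp_mul (f g : 𝓢(E, ℝ)) (v : E) :
    ∂_{v} (f * g) = ∂_{v} f * g + f * ∂_{v} g := by
  ext x
  have hfg : ⇑(f * g) = fun y => f y * g y := rfl
  simp only [lineDerivOp_apply_eq_fderiv, hfg, fderiv_fun_mul f.differentiableAt g.differentiableAt,
    add_apply, smul_apply, smul_eq_mul, mul_apply]
  ring

end Normed

namespace SchwartzMap

variable {E F : Type*} [NormedAddCommGroup F] [NormedSpace ℝ F]
  [NormedAddCommGroup E] [InnerProductSpace ℝ E] [FiniteDimensional ℝ E] {ι : Type*} [Fintype ι]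
  (b : OrthonormalBasis ι ℝ E)

def divergence (u : ι → 𝓢(E, F)) : 𝓢(E, F) := ∑ i, ∂_{b i} (u i)

theorem laplacian_mul (f g : 𝓢(E, ℝ)) :
    Δ (f * g) = Δ f * g + (2 : ℝ) • ∑ i, ∂_{b i} f * ∂_{b i} g + f * Δ g := by
  ext x
  simp only [laplacian_eq_sum b, lineDerivOp_mul, lineDerivOp_add, add_apply, smul_apply,
    sum_apply, mul_apply, smul_eq_mul, Finset.sum_mul, Finset.mul_sum, ← Finset.sum_add_distrib]
  exact Finset.sum_congr rfl fun i _ => by ring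

theorem laplacian_eq_lineDerivOp_divergence {G : ι → 𝓢(E, F)}
    (hG : ∀ i j, ∂_{b i} (G j) = ∂_{b j} (G i)) (i : ι) :
    Δ (G i) = ∂_{b i} (divergence b G) := by
  rw [laplacian_eq_sum b, divergence, lineDerivOp_sum]
  refine Finset.sum_congr rfl fun j _ => ?_
  rw [hG j i, lineDerivOp_comm]

variable [MeasurableSpace E] [BorelSpace E] {μ : Measure E} [μ.IsAddHaarMeasure]

theorem two_mul_integral_mul_lineDerivOp_mul_self (u h : 𝓢(E, ℝ)) (v : E) :
    2 * ∫ x, u x * ∂_{v} h x * h x ∂μ = -∫ x, ∂_{v} u x * (h x * h x) ∂μ := by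
  have hibp := integral_mul_lineDerivOp_right_eq_neg_left (μ := μ) u (h * h) v
  simp only [lineDerivOp_mul, add_apply, mul_apply] at hibp
  rw [← hibp, ← integral_const_mul]
  congr 1 with x
  ring

theorem integral_sum_mul_lineDerivOp_mul_self_eq_zero {u : ι → 𝓢(E, ℝ)}
    (hu : divergence b u = 0) (h : 𝓢(E, ℝ)) :
    ∫ x, (∑ i, u i x * ∂_{b i} h x) * h x ∂μ = 0 := by
  have hsplit : ∫ x, (∑ i, u i x * ∂_{b i} h x) * h x ∂μ
      = ∑ i, ∫ x, u i x * ∂_{b i} h x * h x ∂μ := by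
    simp only [Finset.sum_mul]
    exact integral_finsetSum _ fun i _ => (u i * ∂_{b i} h * h).integrable
  have hdiv : ∫ x, divergence b u x * (h x * h x) ∂μ
      = ∑ i, ∫ x, ∂_{b i} (u i) x * (h x * h x) ∂μ := by
    simp only [divergence, sum_apply, Finset.sum_mul]
    exact integral_finsetSum _ fun i _ => (∂_{b i} (u i) * (h * h)).integrable
  have htwice : 2 * ∫ x, (∑ i, u i x * ∂_{b i} h x) * h x ∂μ = 0 := by
    simp only [hsplit, Finset.mul_sum, two_mul_integral_mul_lineDerivOp_mul_self,
      Finset.sum_neg_distrib, ← hdiv, hu, zero_apply, zero_mul, integral_zero, neg_zero]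
  linarith

theorem integral_laplacian_sum_mul_mul_divergence {u G : ι → 𝓢(E, ℝ)}
    (hu : divergence b u = 0) (hG : ∀ i j, ∂_{b i} (G j) = ∂_{b j} (G i)) :
    ∫ x, Δ (∑ i, u i * G i) x * divergence b G x ∂μ =
      ∑ i, ∫ x, G i x * divergence b G x * Δ (u i) x ∂μ
      + 2 * ∑ i, ∑ j, ∫ x, ∂_{b i} (u j) x * ∂_{b i} (G j) x * divergence b G x ∂μ := by
  set L := divergence b G
  have hexpand : Δ (∑ i, u i * G i) * L = ∑ j, (G j * L * Δ (u j)
      + (2 : ℝ) • ∑ i, ∂_{b i} (u j) * ∂_{b i} (G j) * L) + (∑ j, u j * ∂_{b j} L) * L := by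
    rw [← laplacianCLM_eq', map_sum]
    ext x
    simp only [laplacianCLM_eq', laplacian_mul b, laplacian_eq_lineDerivOp_divergence b hG,
      add_apply, smul_apply, sum_apply, mul_apply, smul_eq_mul, Finset.sum_mul, Finset.mul_sum,
      ← Finset.sum_add_distrib]
    refine Finset.sum_congr rfl fun j _ => ?_
    simp only [add_mul, Finset.sum_mul, mul_assoc]
    ring
  -- integrating through `integralCLM` gives linearity without integrability side conditions
  have := congrArg (integralCLM ℝ μ) hexpand
  simp only [map_sum, map_add, map_smul, integralCLM_apply, mul_apply, sum_apply,
    smul_eq_mul] at this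
  rw [this, integral_sum_mul_lineDerivOp_mul_self_eq_zero b hu, add_zero, Finset.sum_add_distrib,
    ← Finset.mul_sum, Finset.sum_comm]

end SchwartzMap

section Coordinates

variable {n : ℕ}

local notation "ℝⁿ" => EuclideanSpace ℝ (Fin n)

local notation "b" => EuclideanSpace.basisFun (Fin n) ℝ

theorem pd_eq_lineDerivOp (i : Fin n) (f : 𝓢(ℝⁿ, ℝ)) :
    pd i ⇑f = ⇑(∂_{b i} f : 𝓢(ℝⁿ, ℝ)) := by
  ext x
  simp [pd, lineDerivOp_apply_eq_fderiv]

theorem lap_eq_laplacian (f : 𝓢(ℝⁿ, ℝ)) : lap ⇑f = ⇑(Δ f : 𝓢(ℝⁿ, ℝ)) := by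
  ext x
  simp [lap, laplacian_eq_sum b, sum_apply, pd_eq_lineDerivOp]

theorem divergence_basisFun_apply (u : Fin n → 𝓢(ℝⁿ, ℝ)) (x : ℝⁿ) :
    divergence b u x = ∑ i, pd i (u i) x := by
  simp [divergence, sum_apply, pd_eq_lineDerivOp]

theorem lineDerivOp_comm_of_pd_eq {φ : ℝⁿ → ℝ} {G : Fin n → 𝓢(ℝⁿ, ℝ)} (hφ : ContDiff ℝ 2 φ)
    (hG : ∀ i, pd i φ = ⇑(G i)) (i j : Fin n) : (∂_{b i} (G j) : 𝓢(ℝⁿ, ℝ)) = ∂_{b j} (G i) := by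
  ext x
  rw [← congrFun (pd_eq_lineDerivOp i (G j)) x, ← congrFun (pd_eq_lineDerivOp j (G i)) x,
    ← hG, ← hG]
  exact fderiv_fderiv_apply_comm hφ x _ _

theorem lap_eq_divergence_of_pd_eq {φ : ℝⁿ → ℝ} {G : Fin n → 𝓢(ℝⁿ, ℝ)}
    (hG : ∀ i, pd i φ = ⇑(G i)) : lap φ = ⇑(divergence b G : 𝓢(ℝⁿ, ℝ)) := by
  ext x
  simp [lap, divergence_basisFun_apply, hG]

end Coordinates

theorem statement9_general {n : ℕ}
    (u : SchwartzMap (EuclideanSpace ℝ (Fin n)) (EuclideanSpace ℝ (Fin n)))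
    (hdiv : ∀ x, ∑ i, pd i (fun y => u y i) x = 0)
    (d : EuclideanSpace ℝ (Fin n) → EuclideanSpace ℝ (Fin 3))
    (hd : ContDiff ℝ (⊤ : ℕ∞) d)
    (hgrad : ∀ (i : Fin n) (k : Fin 3),
      ∃ g : SchwartzMap (EuclideanSpace ℝ (Fin n)) ℝ,
        ∀ x, g x = pd i (fun z => d z k) x) :
    ((∫ x, ∑ k : Fin 3, lap (fun y => ∑ i, u y i * pd i (fun z => d z k) y) x
          * lap (fun z => d z k) x)
      = (∑ i, ∑ k : Fin 3,
          ∫ x, pd i (fun z => d z k) x * lap (fun z => d z k) x * lap (fun y => u y i) x)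
        + 2 * ∑ i, ∑ j, ∑ k : Fin 3,
            ∫ x, pd i (fun y => u y j) x * pd i (pd j (fun z => d z k)) x
              * lap (fun z => d z k) x) ∧
    (∫ x, ∑ k : Fin 3, (∑ i, u x i * pd i (lap (fun z => d z k)) x)
        * lap (fun z => d z k) x) = 0 := by
  choose g hg using hgrad
  set b := EuclideanSpace.basisFun (Fin n) ℝ with hb
  set U : Fin n → 𝓢(EuclideanSpace ℝ (Fin n), ℝ) := fun i => postcompCLM (EuclideanSpace.proj i) u
  have hG : ∀ k i, pd i (fun z => d z k) = ⇑(g i k) := fun k i => funext fun x => (hg i k x).symm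
  have hdivU : divergence b U = 0 :=
    SchwartzMap.ext fun x => (divergence_basisFun_apply U x).trans (hdiv x)
  have hsymm : ∀ k i j, ∂_{b i} (g j k) = ∂_{b j} (g i k) := fun k =>
    lineDerivOp_comm_of_pd_eq (φ := fun z => d z k)
      (((EuclideanSpace.proj k).contDiff.comp hd).of_le (WithTop.coe_le_coe.mpr le_top)) (hG k)
  have hF : ∀ k, (fun y => ∑ i, u y i * g i k y) = ⇑(∑ i, U i * g i k) := fun k =>
    funext fun y => by simp [sum_apply, U]
  have hU : ∀ i, (fun y => u y i) = ⇑(U i) := fun i => rfl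
  simp only [hG, hF, hU, fun k => lap_eq_divergence_of_pd_eq (hG k), lap_eq_laplacian,
    pd_eq_lineDerivOp, ← hb]
  refine ⟨?_, ?_⟩
  · rw [integral_finsetSum _ fun k _ => ?_]
    · simp only [integral_laplacian_sum_mul_mul_divergence b hdivU (hsymm _)]
      rw [Finset.sum_add_distrib, ← Finset.mul_sum, Finset.sum_comm]
      congr 2
      rw [Finset.sum_comm]
      exact Finset.sum_congr rfl fun i _ => Finset.sum_comm
    · exact (Δ (∑ i, U i * g i k) * divergence b (g · k)).integrable
  · rw [integral_finsetSum _ fun k _ => ?_]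
    · exact Finset.sum_eq_zero fun k _ => integral_sum_mul_lineDerivOp_mul_self_eq_zero b hdivU _
    · simp only [Finset.sum_mul]
      exact integrable_finsetSum _ fun i _ =>
        (U i * ∂_{b i} (divergence b (g · k)) * divergence b (g · k)).integrable

/-- ∫ Δ(u·∇d)·Δd = Σ∫ ∂ᵢd_k Δd_k Δuᵢ + 2Σ∫ ∂ᵢu_j ∂ᵢ∂_j d_k Δd_k,
and the transport contribution ∫ (u·∇)Δd·Δd vanishes. -/
theorem statement9 {n : ℕ} (hn : 2 ≤ n)
    (u : SchwartzMap (EuclideanSpace ℝ (Fin n)) (EuclideanSpace ℝ (Fin n)))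
    (hdiv : ∀ x, ∑ i, pd i (fun y => u y i) x = 0)
    (d : EuclideanSpace ℝ (Fin n) → EuclideanSpace ℝ (Fin 3))
    (hd : ContDiff ℝ (⊤ : ℕ∞) d)
    (hgrad : ∀ (i : Fin n) (k : Fin 3),
      ∃ g : SchwartzMap (EuclideanSpace ℝ (Fin n)) ℝ,
        ∀ x, g x = pd i (fun z => d z k) x) :
    ((∫ x, ∑ k : Fin 3, lap (fun y => ∑ i, u y i * pd i (fun z => d z k) y) x
          * lap (fun z => d z k) x)
      = (∑ i, ∑ k : Fin 3,
          ∫ x, pd i (fun z => d z k) x * lap (fun z => d z k) x * lap (fun y => u y i) x)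
        + 2 * ∑ i, ∑ j, ∑ k : Fin 3,
            ∫ x, pd i (fun y => u y j) x * pd i (pd j (fun z => d z k)) x
              * lap (fun z => d z k) x) ∧
    (∫ x, ∑ k : Fin 3, (∑ i, u x i * pd i (lap (fun z => d z k)) x)
        * lap (fun z => d z k) x) = 0 :=
  statement9_general u hdiv d hd hgrad
end
end

section
/- Let a < b be real numbers, let A ≥ 0 and 0 < θ < 1, and let y : [a,b] → [0,∞) be differentiable with y'(t) ≤ A·(e + y(t))^θ for all t ∈ [a,b]. Then for every t ∈ [a,b], (e + y(t))^{1−θ} ≤ (e + y(a))^{1−θ} + (1−θ)·A·(t − a); in particular, y is bounded on [a,b] by a quantity depending only on y(a), A, θ, and b − a. -/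
/-! By the chain rule `(u ^ (1 - θ))' = (1 - θ) u ^ (-θ) u' ≤ (1 - θ) A` wherever `u' ≤ A u ^ θ`,
so the mean value inequality bounds the growth of `u ^ (1 - θ)` linearly. -/

open Set

lemma one_sub_mul_rpow_neg_mul_le {x x' A θ : ℝ} (hθ : θ ≤ 1) (hx : 0 < x)
    (hx' : x' ≤ A * x ^ θ) : (1 - θ) * x ^ (-θ) * x' ≤ (1 - θ) * A :=
  calc (1 - θ) * x ^ (-θ) * x'
      ≤ (1 - θ) * x ^ (-θ) * (A * x ^ θ) :=
        mul_le_mul_of_nonneg_left hx' (mul_nonneg (by linarith) (by positivity))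
    _ = (1 - θ) * A * (x ^ (-θ) * x ^ θ) := by ring
    _ = (1 - θ) * A := by rw [← Real.rpow_add hx, neg_add_cancel, Real.rpow_zero, mul_one]

theorem rpow_one_sub_le_of_hasDerivAt_le_mul_rpow {a b A θ : ℝ} {u u' : ℝ → ℝ} (hθ : θ ≤ 1)
    (hu_pos : ∀ t ∈ Icc a b, 0 < u t) (hu : ∀ t ∈ Icc a b, HasDerivAt u (u' t) t)
    (hu' : ∀ t ∈ Icc a b, u' t ≤ A * u t ^ θ) :
    ∀ t ∈ Icc a b, u t ^ (1 - θ) ≤ u a ^ (1 - θ) + (1 - θ) * A * (t - a) := by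
  set g : ℝ → ℝ := fun t => u t ^ (1 - θ)
  have hg : ∀ t ∈ Icc a b, HasDerivAt g ((1 - θ) * u t ^ (-θ) * u' t) t := by
    intro t ht
    convert (hu t ht).rpow_const (p := 1 - θ) (Or.inl (hu_pos t ht).ne') using 1
    ring_nf
  have hg_cont : ContinuousOn g (Icc a b) := fun t ht =>
    (hg t ht).continuousAt.continuousWithinAt
  have hg_diff : DifferentiableOn ℝ g (interior (Icc a b)) := fun t ht =>
    (hg t (interior_subset ht)).differentiableAt.differentiableWithinAt
  have hg_deriv : ∀ t ∈ interior (Icc a b), deriv g t ≤ (1 - θ) * A := fun t ht => by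
    have ht' := interior_subset ht
    rw [(hg t ht').deriv]
    exact one_sub_mul_rpow_neg_mul_le hθ (hu_pos t ht') (hu' t ht')
  intro t ht
  have := (convex_Icc a b).image_sub_le_mul_sub_of_deriv_le hg_cont hg_diff hg_deriv
    a ⟨le_rfl, ht.1.trans ht.2⟩ t ht ht.1
  linarith

theorem statement18_general (a b A θ : ℝ)
    (hθ1 : θ < 1) (y y' : ℝ → ℝ)
    (hy0 : ∀ t ∈ Set.Icc a b, 0 ≤ y t)
    (hy : ∀ t ∈ Set.Icc a b, HasDerivAt y (y' t) t)
    (hy' : ∀ t ∈ Set.Icc a b, y' t ≤ A * (Real.exp 1 + y t) ^ θ) :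
    ∀ t ∈ Set.Icc a b,
      (Real.exp 1 + y t) ^ (1 - θ)
        ≤ (Real.exp 1 + y a) ^ (1 - θ) + (1 - θ) * A * (t - a) :=
  rpow_one_sub_le_of_hasDerivAt_le_mul_rpow hθ1.le
    (fun t ht => add_pos_of_pos_of_nonneg (Real.exp_pos 1) (hy0 t ht))
    (fun t ht => (hy t ht).const_add _) hy'

/-- Gronwall-type lemma with sublinear power right-hand side: if
y' (t) ≤ A (e + y t)^θ on [a,b] with 0 < θ < 1, then
(e + y t)^{1−θ} ≤ (e + y a)^{1−θ} + (1−θ) A (t − a) on [a,b]. -/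
theorem statement18 (a b A θ : ℝ) (hab : a < b) (hA : 0 ≤ A)
    (hθ0 : 0 < θ) (hθ1 : θ < 1) (y y' : ℝ → ℝ)
    (hy0 : ∀ t ∈ Set.Icc a b, 0 ≤ y t)
    (hy : ∀ t ∈ Set.Icc a b, HasDerivAt y (y' t) t)
    (hy' : ∀ t ∈ Set.Icc a b, y' t ≤ A * (Real.exp 1 + y t) ^ θ) :
    ∀ t ∈ Set.Icc a b,
      (Real.exp 1 + y t) ^ (1 - θ)
        ≤ (Real.exp 1 + y a) ^ (1 - θ) + (1 - θ) * A * (t - a) :=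
  statement18_general a b A θ hθ1 y y' hy0 hy hy'
end
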